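/- Let $X$ and $Y$ be real random variables with finite second moments such that the law of $Y$ has a continuous strictly increasing CDF $F_Y$ and the law of $X$ has CDF $F_X$. Among all measurable maps $M$ with $M(X)$ distributed as $Y$ and $M$ nondecreasing, the map $M^* = F_Y^{-1}\circ F_X$ satisfies: for any other nondecreasing map $\tilde M$ pushing the law of $X$ to the law of $Y$, $\tilde M = M^*$ almost everywhere with respect to the law of $X$. That is, the monotone transport map between one-dimensional distributions is essentially unique. -/
import Mathlib


open MeasureTheory Set

/-- Essential uniqueness of the monotone transport map between one-dimensional
distributions: if `ν` has a continuous strictly increasing CDF `F_ν`, `μ` has CDF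
`F_μ`, and both have finite second moments, then any nondecreasing map `M̃` pushing
`μ` forward to `ν` agrees `μ`-a.e. with `M* = F_ν⁻¹ ∘ F_μ`. -/
theorem monotone_transport_map_unique
    (μ ν : Measure ℝ) [IsProbabilityMeasure μ] [IsProbabilityMeasure ν]
    (hμ2 : Integrable (fun x => x ^ 2) μ) (hν2 : Integrable (fun x => x ^ 2) ν)
    (Fμ Fν : ℝ → ℝ)
    (hFμ : ∀ x, Fμ x = (μ (Iic x)).toReal)
    (hFν : ∀ x, Fν x = (ν (Iic x)).toReal)
    (hFνc : Continuous Fν) (hFνm : StrictMono Fν)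
    (Mtil : ℝ → ℝ) (hMm : Monotone Mtil) (hMmeas : Measurable Mtil)
    (hpush : μ.map Mtil = ν) :
    Mtil =ᵐ[μ] (Function.invFun Fν ∘ Fμ) := by
  -- ν has no atoms since its CDF is continuous
  have hatom : ∀ a : ℝ, ν {a} = 0 := by
    intro a
    have hto : (ν {a}).toReal = 0 := by
      have hle : ∀ ε : ℝ, 0 < ε → (ν {a}).toReal ≤ ε := by
        intro ε hε
        obtain ⟨δ, hδ, hδ'⟩ := Metric.continuous_iff.mp hFνc a ε hε
        set b := a - δ / 2 with hb
        have hba : b < a := by simp [hb]; linarith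
        have hdist : dist b a < δ := by
          rw [Real.dist_eq]
          simp [hb]
          rw [abs_of_pos (by linarith)]
          linarith
        have hF := hδ' b hdist
        rw [Real.dist_eq, abs_of_nonpos (by
          have := (hFνm hba).le; linarith)] at hF
        -- ν (Iic a) = ν (Iic b) + ν (Ioc b a)
        have hsplit : ν (Iic a) = ν (Iic b) + ν (Ioc b a) := by
          rw [← measure_union (Iic_disjoint_Ioc le_rfl) measurableSet_Ioc,
            Iic_union_Ioc_eq_Iic hba.le]
        have hIoc : (ν (Ioc b a)).toReal = Fν a - Fν b := by
          rw [hFν, hFν, hsplit, ENNReal.toReal_add (measure_ne_top ν _) (measure_ne_top ν _)]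
          ring
        have hsub : (ν {a}).toReal ≤ (ν (Ioc b a)).toReal := by
          apply ENNReal.toReal_mono (measure_ne_top ν _)
          exact measure_mono (by intro y hy; simp at hy; subst hy; exact ⟨hba, le_rfl⟩)
        rw [hIoc] at hsub
        linarith
      have h0 : (ν {a}).toReal ≤ 0 := le_of_forall_pos_le_add (by intro ε hε; simpa using hle ε hε)
      exact le_antisymm h0 ENNReal.toReal_nonneg
    have := measure_ne_top ν {a}
    exact (ENNReal.toReal_eq_zero_iff _).mp hto |>.resolve_right this
  -- key: Fν (Mtil x) = Fμ x for every x
  have hkey : ∀ x : ℝ, Fν (Mtil x) = Fμ x := by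
    intro x
    have hmap : ν (Iic (Mtil x)) = μ (Mtil ⁻¹' Iic (Mtil x)) := by
      rw [← hpush, Measure.map_apply hMmeas measurableSet_Iic]
    have hsub1 : Iic x ⊆ Mtil ⁻¹' Iic (Mtil x) := fun y hy => hMm hy
    have hsub2 : Mtil ⁻¹' Iic (Mtil x) ⊆ Iic x ∪ Mtil ⁻¹' {Mtil x} := by
      intro y hy
      rcases le_or_gt y x with h | h
      · exact Or.inl h
      · exact Or.inr (le_antisymm hy (hMm h.le))
    have hfiber : μ (Mtil ⁻¹' {Mtil x}) = 0 := by
      rw [← Measure.map_apply hMmeas (measurableSet_singleton _), hpush]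
      exact hatom _
    have hle : μ (Mtil ⁻¹' Iic (Mtil x)) ≤ μ (Iic x) := by
      calc μ (Mtil ⁻¹' Iic (Mtil x)) ≤ μ (Iic x ∪ Mtil ⁻¹' {Mtil x}) := measure_mono hsub2
        _ ≤ μ (Iic x) + μ (Mtil ⁻¹' {Mtil x}) := measure_union_le _ _
        _ = μ (Iic x) := by rw [hfiber, add_zero]
    have heq : μ (Mtil ⁻¹' Iic (Mtil x)) = μ (Iic x) :=
      le_antisymm hle (measure_mono hsub1)
    rw [hFν, hFμ, hmap, heq]
  refine Filter.Eventually.of_forall fun x => ?_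
  have : Function.invFun Fν (Fν (Mtil x)) = Mtil x :=
    Function.leftInverse_invFun hFνm.injective (Mtil x)
  simp only [Function.comp_apply, ← hkey x, this]
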